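/- Let U ⊆ ℂ be open, let a, b, c, d ∈ ℂ with a·d − b·c = 1, set γ(z) = (a·z+b)/(c·z+d), and assume γ(z) ∈ U for all z ∈ U with c·z+d ≠ 0. Let k ∈ ℤ and let α : ℂ → ℂ be analytic on U with α(γ(z)) = (c·z+d)^k · α(z) for all z ∈ U with c·z+d ≠ 0. Define φ_α(w) = w + k·α(w)/α'(w). Then for every z ∈ U such that c·z+d ≠ 0, α'(z) ≠ 0, α'(γ(z)) ≠ 0, and c·φ_α(z) + d ≠ 0, one has φ_α(γ(z)) = (a·φ_α(z) + b)/(c·φ_α(z) + d). -/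

import Mathlib

/-!
Differentiating the automorphy relation `α (γ z) = (c z + d)^k α z`, with `γ' z = (c z + d)⁻²`,
gives `α' (γ z) = (c z + d)^(k+2) α' z + k c (c z + d)^(k+1) α z`. Hence, with `r = k α z / α' z`,
`φ (γ z) - γ z = k α (γ z) / α' (γ z) = r / ((c z + d) (c (z + r) + d))`, which is exactly
`γ (z + r) - γ z` because `a d - b c = 1`.
-/

open Filter Topology

theorem hasDerivAt_mul_add (c d z : ℂ) : HasDerivAt (fun w => c * w + d) c z := by
  simpa using ((hasDerivAt_id z).const_mul c).add_const d

theorem hasDerivAt_mobius {a b c d z : ℂ} (hz : c * z + d ≠ 0) :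
    HasDerivAt (fun w => (a * w + b) / (c * w + d)) ((a * d - b * c) / (c * z + d) ^ 2) z :=
  ((hasDerivAt_mul_add a b z).div (hasDerivAt_mul_add c d z) hz).congr_deriv (by ring)

theorem mobius_add_eq {a b c d z r : ℂ} (hz : c * z + d ≠ 0) (hzr : c * (z + r) + d ≠ 0) :
    (a * (z + r) + b) / (c * (z + r) + d) =
      (a * z + b) / (c * z + d) + (a * d - b * c) * r / ((c * z + d) * (c * (z + r) + d)) := by
  rw [div_add_div _ _ hz (mul_ne_zero hz hzr),
    div_eq_div_iff hzr (mul_ne_zero hz (mul_ne_zero hz hzr))]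
  ring

theorem deriv_comp_mobius_of_automorphy {a b c d z : ℂ} {k : ℤ} {α : ℂ → ℂ}
    (hdet : a * d - b * c = 1) (hz : c * z + d ≠ 0)
    (hαz : DifferentiableAt ℂ α z) (hαγz : DifferentiableAt ℂ α ((a * z + b) / (c * z + d)))
    (hauto : (fun w => α ((a * w + b) / (c * w + d))) =ᶠ[𝓝 z] fun w => (c * w + d) ^ k * α w) :
    deriv α ((a * z + b) / (c * z + d)) =
      (c * z + d) ^ (k + 2) * deriv α z + k * c * (c * z + d) ^ (k + 1) * α z := by
  have hlhs := hαγz.hasDerivAt.comp z (hasDerivAt_mobius (a := a) (b := b) hz)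
  have hfactor : HasDerivAt (fun w => (c * w + d) ^ k) (k * (c * z + d) ^ (k - 1) * c) z := by
    exact (hasDerivAt_zpow k _ (Or.inl hz)).comp z (hasDerivAt_mul_add c d z)
  have h := (hlhs.congr_of_eventuallyEq hauto.symm).unique (hfactor.mul hαz.hasDerivAt)
  rw [hdet, mul_one_div, div_eq_iff (pow_ne_zero 2 hz)] at h
  rw [h, zpow_add₀ hz, zpow_add₀ hz, zpow_sub₀ hz]
  field_simp
  ring

theorem phi_operator_equivariance
    (U : Set ℂ) (hU : IsOpen U)
    (a b c d : ℂ) (hdet : a * d - b * c = 1)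
    (γ : ℂ → ℂ) (hγ : γ = fun z => (a * z + b) / (c * z + d))
    (hmaps : ∀ z ∈ U, c * z + d ≠ 0 → γ z ∈ U)
    (k : ℤ) (α : ℂ → ℂ) (hα : AnalyticOnNhd ℂ α U)
    (hauto : ∀ z ∈ U, c * z + d ≠ 0 → α (γ z) = (c * z + d) ^ k * α z)
    (φ : ℂ → ℂ) (hφ : φ = fun w => w + (k : ℂ) * α w / deriv α w) :
    ∀ z ∈ U, c * z + d ≠ 0 → deriv α z ≠ 0 → deriv α (γ z) ≠ 0 →
      c * φ z + d ≠ 0 →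
      φ (γ z) = (a * φ z + b) / (c * φ z + d) := by
  subst hγ hφ
  intro z hz hC hα' hαγ' hφC
  have hnear : ∀ᶠ w in 𝓝 z, α ((a * w + b) / (c * w + d)) = (c * w + d) ^ k * α w := by
    filter_upwards [hU.mem_nhds hz, (hasDerivAt_mul_add c d z).continuousAt.eventually_ne hC]
      with w hwU hw using hauto w hwU hw
  have hderiv := deriv_comp_mobius_of_automorphy hdet hC (hα z hz).differentiableAt
    (hα _ (hmaps z hz hC)).differentiableAt hnear
  simp only at hαγ' hφC ⊢
  rw [hderiv, zpow_add₀ hC, zpow_add₀ hC] at hαγ'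
  rw [mobius_add_eq hC hφC, hdet, hauto z hz hC, hderiv, zpow_add₀ hC, zpow_add₀ hC]
  congr 1
  field_simp
  ring
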